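/- Let $0 < M < 2/(3\sqrt{3})$ and let $r_c$ be the largest positive root of $r^3 - r + M$, with $z_c = 1/r_c$ and $z_\odot = 2/(3M)$. Then $z_\odot > z_c$. -/

import Mathlib

/-! The cubic `f r = r ^ 3 - r + M` has its local minimum at `r = 1/√3`, where it equals
`M - 2/(3√3) < 0`, while `f 1 = M > 0`; so `f` has a root in `(1/√3, 1]`, and the largest root
`r_c` satisfies `3 r_c² > 1`. Substituting `M = r_c - r_c³`, the claim `3M < 2 r_c` is exactly
`r_c < 3 r_c³`. -/

open Real Set

lemma cubic_at_inv_sqrt_three (M : ℝ) :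
    (1 / √3) ^ 3 - 1 / √3 + M = M - 2 / (3 * √3) := by
  have h3 : √3 ^ 2 = 3 := sq_sqrt (by norm_num)
  have hs : √3 ≠ 0 := by positivity
  field_simp
  rw [pow_three, ← mul_assoc, ← sq, h3]
  ring

lemma inv_sqrt_three_lt_one : 1 / √3 < 1 := by
  rw [div_lt_one (by positivity), lt_sqrt zero_le_one]
  norm_num

lemma exists_cubic_root_gt_inv_sqrt_three {M : ℝ} (hM0 : 0 ≤ M) (hM : M < 2 / (3 * √3)) :
    ∃ r, 1 / √3 < r ∧ r ^ 3 - r + M = 0 := by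
  have hcont : ContinuousOn (fun r : ℝ => r ^ 3 - r + M) (Icc (1 / √3) 1) := by fun_prop
  have hzero : (0 : ℝ) ∈ Ioc ((1 / √3) ^ 3 - 1 / √3 + M) (1 ^ 3 - 1 + M) := by
    rw [cubic_at_inv_sqrt_three]
    constructor <;> linarith
  obtain ⟨r, hr, hroot⟩ := intermediate_value_Ioc inv_sqrt_three_lt_one.le hcont hzero
  exact ⟨r, hr.1, hroot⟩

lemma one_div_lt_of_cubic_root_gt_inv_sqrt_three {M r : ℝ} (hM0 : 0 < M)
    (hroot : r ^ 3 - r + M = 0) (hr : 1 / √3 < r) : 1 / r < 2 / (3 * M) := by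
  have hr0 : 0 < r := lt_trans (by positivity) hr
  have hsq : 1 / 3 < r ^ 2 := by
    have := pow_lt_pow_left₀ hr (by positivity) two_ne_zero
    rwa [div_pow, one_pow, sq_sqrt (by norm_num)] at this
  rw [div_lt_div_iff₀ hr0 (by positivity)]
  nlinarith

theorem zodot_gt_zc_general (M rc : ℝ) (hM0 : 0 < M) (hM : M < 2 / (3 * Real.sqrt 3))
    (hroot : rc ^ 3 - rc + M = 0)
    (hmax : ∀ r : ℝ, 0 < r → r ^ 3 - r + M = 0 → r ≤ rc) :
    1 / rc < 2 / (3 * M) := by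
  obtain ⟨r, hr, hr_root⟩ := exists_cubic_root_gt_inv_sqrt_three hM0.le hM
  have hr_le : r ≤ rc := hmax r (lt_trans (by positivity) hr) hr_root
  exact one_div_lt_of_cubic_root_gt_inv_sqrt_three hM0 hroot (hr.trans_le hr_le)

/-- The critical point `z⊙ = 2/(3M)` of `F` lies beyond `z_c = 1/r_c`. -/
theorem zodot_gt_zc (M rc : ℝ) (hM0 : 0 < M) (hM : M < 2 / (3 * Real.sqrt 3))
    (hrc : 0 < rc) (hroot : rc ^ 3 - rc + M = 0)
    (hmax : ∀ r : ℝ, 0 < r → r ^ 3 - r + M = 0 → r ≤ rc) :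
    1 / rc < 2 / (3 * M) :=
  zodot_gt_zc_general M rc hM0 hM hroot hmax
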